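/- The smooth projective genus 2 curve with LMFDB label 20.60.2.j.1, given by the model y² = −x⁶ − 2x⁵ − 5x⁴ + 5x³ + 5x² + 18x + 11, has no rational points. Equivalently, in the weighted model, there exist no rational numbers x, y, z with (x, z) ≠ (0, 0) such that y² = −x⁶ − 2x⁵z − 5x⁴z² + 5x³z³ + 5x²z⁴ + 18xz⁵ + 11z⁶. -/

import Mathlib

/-!
The sextic factors as `-Q · P` with `Q = x² - xz - z²` and `P` a positive definite quartic.
At a primitive integer point `(X, Z)` any common divisor of `Q` and `P` divides `25`, so from
`Y² = (-Q) · P` with `P > 0` both `-Q` and `P` are `g` times a square, for a divisor `g` of `25`.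
As `g ≡ 1 (mod 4)`, `-Q` and `P` are then squares modulo `4`, and checking residues shows that
this forces `X` and `Z` to be even.
-/

section Factors

variable {R : Type*} [CommRing R]

def quadraticFactor (x z : R) : R := x ^ 2 - x * z - z ^ 2

def quarticFactor (x z : R) : R :=
  x ^ 4 + 3 * x ^ 3 * z + 9 * x ^ 2 * z ^ 2 + 7 * x * z ^ 3 + 11 * z ^ 4

theorem map_quadraticFactor {S : Type*} [CommRing S] (f : R →+* S) (x z : R) :
    f (quadraticFactor x z) = quadraticFactor (f x) (f z) := by
  simp [quadraticFactor]

theorem map_quarticFactor {S : Type*} [CommRing S] (f : R →+* S) (x z : R) :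
    f (quarticFactor x z) = quarticFactor (f x) (f z) := by
  simp [quarticFactor, map_ofNat]

theorem IsCoprime.dvd_of_dvd_mul_pow {d c x z : R} (hxz : IsCoprime x z) (n : ℕ)
    (hx : d ∣ c * x ^ n) (hz : d ∣ c * z ^ n) : d ∣ c := by
  obtain ⟨u, v, huv⟩ := hxz.pow (m := n) (n := n)
  have hc : c = u * (c * x ^ n) + v * (c * z ^ n) := by linear_combination -c * huv
  rw [hc]
  exact dvd_add (hx.mul_left u) (hz.mul_left v)

theorem dvd_twentyFive_of_dvd_quadraticFactor_of_dvd_quarticFactor {d x z : R}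
    (hxz : IsCoprime x z) (hQ : d ∣ quadraticFactor x z) (hP : d ∣ quarticFactor x z) :
    d ∣ 25 := by
  refine hxz.dvd_of_dvd_mul_pow 5 ?_ ?_
  · have : 25 * x ^ 5 = (2 * x + z) * quarticFactor x z
        + (23 * x ^ 3 + 16 * x ^ 2 * z + 18 * x * z ^ 2 + 11 * z ^ 3) * quadraticFactor x z := by
      simp only [quadraticFactor, quarticFactor]; ring
    rw [this]
    exact dvd_add (hP.mul_left _) (hQ.mul_left _)
  · have : 25 * z ^ 5 = (2 * z - x) * quarticFactor x z
        + (x ^ 3 + 2 * x ^ 2 * z + 6 * x * z ^ 2 - 3 * z ^ 3) * quadraticFactor x z := by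
      simp only [quadraticFactor, quarticFactor]; ring
    rw [this]
    exact dvd_add (hP.mul_left _) (hQ.mul_left _)

end Factors

theorem quarticFactor_pos {R : Type*} [CommRing R] [LinearOrder R] [IsStrictOrderedRing R]
    {x z : R} (h : (x, z) ≠ (0, 0)) : 0 < quarticFactor x z := by
  have sos : 44 * quarticFactor x z
      = 11 * (2 * x ^ 2 + 3 * x * z + 4 * z ^ 2) ^ 2 + z ^ 2 * (11 * x + 2 * z) ^ 2
        + 304 * z ^ 4 := by
    simp only [quarticFactor]; ring
  rcases eq_or_ne z 0 with rfl | hz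
  · have hx : x ≠ 0 := fun hx => h (by rw [hx])
    have : 0 < x ^ 4 := by positivity
    simpa [quarticFactor] using this
  · have : 0 < 44 * quarticFactor x z := by
      rw [sos]; positivity
    linarith

theorem exists_eq_gcd_mul_sq_of_mul_eq_sq {α : Type*} [CommMonoidWithZero α]
    [UniqueFactorizationMonoid α] [GCDMonoid α] [Subsingleton αˣ] {a b c : α}
    (h : a * b = c ^ 2) : ∃ s t, a = gcd a b * s ^ 2 ∧ b = gcd a b * t ^ 2 := by
  obtain ⟨a', b', ha, hb, hunit⟩ := extract_gcd a b
  set g := gcd a b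
  rcases eq_or_ne g 0 with hg | hg
  · exact ⟨0, 0, by rw [ha, hg, zero_mul, zero_mul], by rw [hb, hg, zero_mul, zero_mul]⟩
  have hgc : g ∣ c := by
    rw [← UniqueFactorizationMonoid.pow_dvd_pow_iff_dvd two_ne_zero]
    exact ⟨a' * b', by rw [← h, ha, hb, sq, mul_mul_mul_comm]⟩
  obtain ⟨k, rfl⟩ := hgc
  have hab' : a' * b' = k ^ 2 := by
    refine mul_left_cancel₀ (pow_ne_zero 2 hg) ?_
    rw [← mul_pow, ← h, ha, hb, sq g, mul_mul_mul_comm]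
  obtain ⟨s, hs⟩ := exists_eq_pow_of_mul_eq_pow hunit hab'
  obtain ⟨t, ht⟩ := exists_eq_pow_of_mul_eq_pow ((gcd_comm' b' a').isUnit_iff.mpr hunit)
    ((mul_comm b' a').trans hab')
  exact ⟨s, t, hs ▸ ha, ht ▸ hb⟩

theorem not_isCoprime_of_squares_mod_four {x z s t : ZMod 4} (hQ : -quadraticFactor x z = s ^ 2)
    (hP : quarticFactor x z = t ^ 2) : ¬ IsCoprime x z := by
  rintro ⟨u, v, huv⟩
  have both_even : ∀ x z s t : ZMod 4,
      -quadraticFactor x z = s ^ 2 → quarticFactor x z = t ^ 2 → 2 * x = 0 ∧ 2 * z = 0 := by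
    unfold quadraticFactor quarticFactor; decide
  obtain ⟨hx, hz⟩ := both_even x z s t hQ hP
  have : (2 : ZMod 4) = u * (2 * x) + v * (2 * z) := by linear_combination 2 * huv.symm
  rw [hx, hz, mul_zero, mul_zero, add_zero] at this
  exact absurd this (by decide)

theorem Int.eq_natCast_mul_sq_of_natAbs_eq {e : ℤ} (he : 0 ≤ e) {g s : ℕ}
    (h : e.natAbs = g * s ^ 2) : e = g * s ^ 2 := by
  rw [← Int.natAbs_of_nonneg he, h]; push_cast; rfl

theorem sq_ne_neg_quadraticFactor_mul_quarticFactor {X Z : ℤ} (hXZ : IsCoprime X Z) (Y : ℤ) :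
    Y ^ 2 ≠ -quadraticFactor X Z * quarticFactor X Z := by
  intro hY
  have hP : 0 < quarticFactor X Z :=
    quarticFactor_pos fun h0 => by
      obtain ⟨rfl, rfl⟩ := Prod.ext_iff.mp h0
      exact not_isCoprime_zero_zero hXZ
  have hQ : 0 ≤ -quadraticFactor X Z := nonneg_of_mul_nonneg_left (hY ▸ sq_nonneg Y) hP
  obtain ⟨s, t, hs, ht⟩ := exists_eq_gcd_mul_sq_of_mul_eq_sq
    (a := (-quadraticFactor X Z).natAbs) (b := (quarticFactor X Z).natAbs) (c := Y.natAbs)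
    (by rw [← Int.natAbs_mul, ← hY, Int.natAbs_pow])
  set g := gcd (-quadraticFactor X Z).natAbs (quarticFactor X Z).natAbs
  have hg : (g : ℤ) ∣ 25 := dvd_twentyFive_of_dvd_quadraticFactor_of_dvd_quarticFactor hXZ
    (dvd_neg.mp (Int.natCast_dvd.mpr (gcd_dvd_left _ _)))
    (Int.natCast_dvd.mpr (gcd_dvd_right _ _))
  have hg4 : (g : ZMod 4) = 1 :=
    (by decide : ∀ d ∈ Nat.divisors 25, (d : ZMod 4) = 1) g
      (Nat.mem_divisors.mpr ⟨Int.natCast_dvd_natCast.mp hg, by norm_num⟩)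
  have hs4 := congrArg (Int.castRingHom (ZMod 4)) (Int.eq_natCast_mul_sq_of_natAbs_eq hQ hs)
  have ht4 := congrArg (Int.castRingHom (ZMod 4)) (Int.eq_natCast_mul_sq_of_natAbs_eq hP.le ht)
  simp only [map_neg, map_mul, map_pow, map_natCast, map_quadraticFactor, map_quarticFactor,
    hg4, one_mul] at hs4 ht4
  exact not_isCoprime_of_squares_mod_four hs4 ht4 (hXZ.map _)

theorem Rat.exists_isCoprime_mul_of_ne_zero {x z : ℚ} (h : (x, z) ≠ (0, 0)) :
    ∃ (X Z : ℤ) (q : ℚ), q ≠ 0 ∧ IsCoprime X Z ∧ x = X * q ∧ z = Z * q := by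
  have hD : ((x.den * z.den : ℕ) : ℚ) ≠ 0 := by positivity
  have hN : 0 < Int.gcd (x.num * z.den) (z.num * x.den) := by
    refine Int.gcd_pos_iff.mpr ?_
    by_contra! h0
    simp_all
  obtain ⟨g, X, Z, hg, hXZ, hx, hz⟩ := Int.exists_gcd_one' hN
  refine ⟨X, Z, g / (x.den * z.den : ℕ), by positivity, Int.isCoprime_iff_gcd_eq_one.mpr hXZ,
    ?_, ?_⟩
  · rw [mul_div_assoc', eq_div_iff hD, ← Int.cast_natCast g, ← Int.cast_mul, ← hx]
    push_cast
    rw [← mul_assoc, Rat.mul_den_eq_num]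
  · rw [mul_div_assoc', eq_div_iff hD, ← Int.cast_natCast g, ← Int.cast_mul, ← hz]
    push_cast
    rw [mul_left_comm, Rat.mul_den_eq_num, mul_comm]

/-- The smooth projective genus 2 curve with LMFDB label 20.60.2.j.1, with model
`y² = −x⁶ − 2x⁵ − 5x⁴ + 5x³ + 5x² + 18x + 11`, has no rational points: there are no
rational `x, y, z` with `(x, z) ≠ (0, 0)` satisfying the homogenized equation. -/
theorem modular_curve_20_60_2_j_1_no_rational_points :
    ¬ ∃ x y z : ℚ, (x, z) ≠ (0, 0) ∧
      y ^ 2 = -x ^ 6 - 2 * x ^ 5 * z - 5 * x ^ 4 * z ^ 2 + 5 * x ^ 3 * z ^ 3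
        + 5 * x ^ 2 * z ^ 4 + 18 * x * z ^ 5 + 11 * z ^ 6 := by
  rintro ⟨x, y, z, hxz, hy⟩
  obtain ⟨X, Z, q, hq, hXZ, rfl, rfl⟩ := Rat.exists_isCoprime_mul_of_ne_zero hxz
  have hw : (y / q ^ 3) ^ 2 = ((-quadraticFactor X Z * quarticFactor X Z : ℤ) : ℚ) := by
    rw [div_pow, hy]
    push_cast [quadraticFactor, quarticFactor]
    field_simp
    ring
  obtain ⟨Y, hY⟩ := Rat.isSquare_intCast_iff.mp ⟨_, hw.symm.trans (sq _)⟩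
  exact sq_ne_neg_quadraticFactor_mul_quarticFactor hXZ Y (hY.trans (sq Y).symm).symm
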